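/- Let C = conv{γ₁, γ₂} ⊂ ℝ³ with γ₁(t) = (cos t, sin t, 1) for t ∈ [0, π/2] and γ₂(t) = (cos t, sin t, −1) for t ∈ [0, π]. Then the tangent cone T(x̄; C) at the point x̄ = (0,1,1) is not facially exposed: the ray {(0,0,z) : z ≤ 0} is a face of T(x̄;C) (it is a subface of the face exposed by the normal (0,1,0)) but it is not an exposed face of T(x̄;C). -/

import Mathlib

/- Common definitions following "Facially Dual Complete (Nice) cones and
lexicographic tangents" by V. Roshchina and L. Tunçel. -/

open Set Filter
open scoped Pointwise

local notation "⟪" x ", " y "⟫" => @inner ℝ _ _ x y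

variable {E : Type*} [NormedAddCommGroup E] [InnerProductSpace ℝ E]

/-- The tangent cone to a set `C` at `x`: the closure of the cone of feasible
directions `{d : x + ε • d ∈ C for some ε > 0}`. -/
def TangCone (x : E) (C : Set E) : Set E :=
  closure {d : E | ∃ ε : ℝ, 0 < ε ∧ x + ε • d ∈ C}

/-- `F` is a face of the convex set `C`: a closed convex subset such that any open
segment of `C` whose interior meets `F` has both endpoints in `F`. -/
def IsFaceOf (F C : Set E) : Prop :=
  F ⊆ C ∧ Convex ℝ F ∧ IsClosed F ∧
    ∀ x ∈ F, ∀ y ∈ C, ∀ z ∈ C, x ∈ openSegment ℝ y z → y ∈ F ∧ z ∈ F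

/-- A proper face: a nonempty face different from the whole set. -/
def IsProperFaceOf (F C : Set E) : Prop := IsFaceOf F C ∧ F.Nonempty ∧ F ≠ C

/-- The dual cone `K* = {s : ⟨s,x⟩ ≥ 0 for all x ∈ K}`. -/
def DualCone' (K : Set E) : Set E := {s : E | ∀ x ∈ K, 0 ≤ ⟪s, x⟫}

/-- `F^⊥ = {s : ⟨s,x⟩ = 0 for all x ∈ F}`. -/
def PerpOf (F : Set E) : Set E := {s : E | ∀ x ∈ F, ⟪s, x⟫ = 0}

/-- Facial dual completeness: `K* + F^⊥` is closed for every proper face `F` of `K`. -/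
def IsFDC (K : Set E) : Prop :=
  ∀ F : Set E, IsProperFaceOf F K → IsClosed (DualCone' K + PerpOf F)

/-- Tangential exposure: `T(x;C) ∩ span F = T(x;F)` for every proper face `F` and `x ∈ F`. -/
def TangentiallyExposed (C : Set E) : Prop :=
  ∀ F : Set E, IsProperFaceOf F C → ∀ x ∈ F,
    TangCone x C ∩ (Submodule.span ℝ F : Set E) = TangCone x F

/-- The family of all tangent cones of members of a family of sets. -/
def TangFamily (𝒦 : Set (Set E)) : Set (Set E) :=
  {T | ∃ C ∈ 𝒦, ∃ x ∈ C, T = TangCone x C}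

/-- `𝒯^k(C)`: the `k`-fold iterated tangent-cone families of `C`;
its members are the lexicographic tangent cones (of order `k`) of `C`. -/
def TangIter (C : Set E) : ℕ → Set (Set E)
  | 0 => {C}
  | k + 1 => TangFamily (TangIter C k)

/-- Strong tangential exposure: `C` and all of its lexicographic tangent cones are
tangentially exposed. -/
def StronglyTangentiallyExposed (C : Set E) : Prop :=
  ∀ k : ℕ, ∀ T ∈ TangIter C k, TangentiallyExposed T

/-- `F` is an exposed face of `C`: the set of maximizers over `C` of some linear functional. -/
def IsExposedFaceOf (F C : Set E) : Prop :=
  ∃ p : E, F = {x ∈ C | ∀ y ∈ C, ⟪p, y⟫ ≤ ⟪p, x⟫}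

/-- `C` is facially exposed: every proper face of `C` is exposed. -/
def FaciallyExposed (C : Set E) : Prop :=
  ∀ F : Set E, IsProperFaceOf F C → IsExposedFaceOf F C

/-- The normal cone to `C` at `x`. -/
def NormalCone' (x : E) (C : Set E) : Set E := {s : E | ∀ y ∈ C, ⟪s, y - x⟫ ≤ 0}

/-- The minimal face of `C` containing `S`. -/
def MinimalFace (S C : Set E) : Set E := ⋂₀ {F : Set E | IsFaceOf F C ∧ S ⊆ F}

/-- `K` is a cone: closed under positive scalar multiplication. -/
def IsConeSet (K : Set E) : Prop := ∀ c : ℝ, 0 < c → ∀ x ∈ K, c • x ∈ K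

noncomputable section CylinderExample

/-- Shorthand for vectors in `ℝ³`. -/
def v3 (a b c : ℝ) : EuclideanSpace ℝ (Fin 3) := WithLp.toLp 2 ![a, b, c]

/-- `γ₁(t) = (cos t, sin t, 1)`, `t ∈ [0, π/2]`. -/
def γ₁ (t : ℝ) : EuclideanSpace ℝ (Fin 3) := v3 (Real.cos t) (Real.sin t) 1

/-- `γ₂(t) = (cos t, sin t, −1)`, `t ∈ [0, π]`. -/
def γ₂ (t : ℝ) : EuclideanSpace ℝ (Fin 3) := v3 (Real.cos t) (Real.sin t) (-1)

/-- `C = conv{γ₁, γ₂}`. -/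
def Cset : Set (EuclideanSpace ℝ (Fin 3)) :=
  convexHull ℝ (γ₁ '' Icc 0 (Real.pi / 2) ∪ γ₂ '' Icc 0 Real.pi)

/-- The point `x̄ = (0,1,1)`. -/
def xbar : EuclideanSpace ℝ (Fin 3) := v3 0 1 1

/-- The ray `{(0,0,z) : z ≤ 0}`. -/
def Rray : Set (EuclideanSpace ℝ (Fin 3)) := {v | ∃ z : ℝ, z ≤ 0 ∧ v = v3 0 0 z}

/-- The face of `T(x̄;C)` exposed by the normal `(0,1,0)`. -/
def Gface : Set (EuclideanSpace ℝ (Fin 3)) :=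
  {x ∈ TangCone xbar Cset | ∀ y ∈ TangCone xbar Cset, ⟪v3 0 1 0, y⟫ ≤ ⟪v3 0 1 0, x⟫}

/-
Every direction of `T(x̄;C)` lies in the closed convex cone
`K = {x : x₁ ≤ 0, x₂ ≤ 0, 0 ≤ x₀ + √(x₁x₂)}`: the generators of `C` shifted by `x̄` do, and
`√(x₁x₂)` is concave on the negative quadrant. On `K` the ray is cut out by `x₁ = 0` and then
`x₀ = 0`, so it is a face of every subset of `K` that contains it.
A functional exposing the ray vanishes on it and is nonpositive on `T(x̄;C)`. The curve `γ₁`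
leaves `x̄` backwards with velocity `(1,0,0)`, so this direction is tangent and the functional is
`≤ 0` on it. Along `γ₂` the functional is maximal at `t = π/2`, where `γ₂ = x̄ - (0,0,2)` and
`γ₂' = (-1,0,0)`, so it is `≥ 0` on `(1,0,0)` too. Then `(1,0,0)` lies in the exposed face but not
on the ray.
-/

open Real Topology

theorem IsFaceOf.mono {F C K : Set E} (hF : IsFaceOf F K) (hCK : C ⊆ K) (hFC : F ⊆ C) :
    IsFaceOf F C :=
  ⟨hFC, hF.2.1, hF.2.2.1, fun x hx y hy z hz hxyz => hF.2.2.2 x hx y (hCK hy) z (hCK hz) hxyz⟩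

theorem tangCone_subset_of_sub_mem {x : E} {C K : Set E} (hK : IsClosed K) (hKcone : IsConeSet K)
    (hCK : ∀ y ∈ C, y - x ∈ K) : TangCone x C ⊆ K := by
  refine closure_minimal ?_ hK
  rintro d ⟨ε, hε, hd⟩
  simpa [smul_smul, inv_mul_cancel₀ hε.ne'] using hKcone ε⁻¹ (inv_pos.2 hε) _ (hCK _ hd)

theorem smul_sub_mem_tangCone {x y : E} {C : Set E} (hC : Convex ℝ C) (hx : x ∈ C) (hy : y ∈ C)
    {c : ℝ} (hc : 0 ≤ c) : c • (y - x) ∈ TangCone x C := by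
  refine subset_closure ⟨(1 + c)⁻¹, by positivity, ?_⟩
  rw [smul_smul]
  refine hC.add_smul_sub_mem hx hy ⟨by positivity, ?_⟩
  rw [inv_mul_le_iff₀ (by positivity)]
  linarith

theorem mem_tangCone_of_hasDerivAt {c : ℝ → E} {x v : E} {C : Set E} (hc : HasDerivAt c v 0)
    (hc0 : c 0 = x) (hC : ∀ᶠ t in 𝓝[>] 0, c t ∈ C) : v ∈ TangCone x C := by
  refine mem_closure_of_tendsto hc.tendsto_slope_zero_right ?_
  filter_upwards [hC, self_mem_nhdsWithin] with t ht (htpos : 0 < t)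
  refine ⟨t, htpos, ?_⟩
  rwa [zero_add, hc0, smul_inv_smul₀ htpos.ne', add_sub_cancel]

theorem HasDerivAt.nonpos_of_eventually_le {f : ℝ → ℝ} {f' t₀ : ℝ} (hf : HasDerivAt f f' t₀)
    (hle : ∀ᶠ t in 𝓝[>] 0, f (t₀ + t) ≤ f t₀) : f' ≤ 0 := by
  refine le_of_tendsto hf.tendsto_slope_zero_right ?_
  filter_upwards [hle, self_mem_nhdsWithin] with t ht (htpos : 0 < t)
  exact smul_nonpos_of_nonneg_of_nonpos (inv_nonneg.2 htpos.le) (sub_nonpos.2 ht)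

theorem sqrt_mul_add_sqrt_mul_le {a b c d : ℝ} (ha : 0 ≤ a) (hb : 0 ≤ b) (hc : 0 ≤ c)
    (hd : 0 ≤ d) : √(a * b) + √(c * d) ≤ √((a + c) * (b + d)) := by
  rw [sqrt_mul ha, sqrt_mul hc, sqrt_mul (add_nonneg ha hc)]
  simpa [Fin.sum_univ_two] using Real.sum_sqrt_mul_sqrt_le Finset.univ (f := ![a, c])
    (g := ![b, d]) (Fin.forall_fin_two.2 ⟨ha, hc⟩) (Fin.forall_fin_two.2 ⟨hb, hd⟩)

theorem sqrt_mul_mul_mul_eq {a : ℝ} (ha : 0 ≤ a) (u w : ℝ) : √(a * u * (a * w)) = a * √(u * w) := by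
  rw [show a * u * (a * w) = a ^ 2 * (u * w) by ring, sqrt_mul (sq_nonneg a), sqrt_sq ha]

theorem v3_apply_zero (a b c : ℝ) : v3 a b c 0 = a := rfl
theorem v3_apply_one (a b c : ℝ) : v3 a b c 1 = b := rfl
theorem v3_apply_two (a b c : ℝ) : v3 a b c 2 = c := rfl

theorem v3_sub (a b c a' b' c' : ℝ) : v3 a b c - v3 a' b' c' = v3 (a - a') (b - b') (c - c') := by
  ext i; fin_cases i <;> rfl

theorem v3_smul (r a b c : ℝ) : r • v3 a b c = v3 (r * a) (r * b) (r * c) := by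
  ext i; fin_cases i <;> rfl

theorem inner_v3_left (a b c : ℝ) (y : EuclideanSpace ℝ (Fin 3)) :
    ⟪v3 a b c, y⟫ = a * y 0 + b * y 1 + c * y 2 := by
  simp [v3, PiLp.inner_apply, Fin.sum_univ_three, mul_comm]

theorem hasDerivAt_v3 {f g h : ℝ → ℝ} {f' g' h' t : ℝ} (hf : HasDerivAt f f' t)
    (hg : HasDerivAt g g' t) (hh : HasDerivAt h h' t) :
    HasDerivAt (fun t => v3 (f t) (g t) (h t)) (v3 f' g' h') t := by
  have hvec : HasDerivAt (fun t => ![f t, g t, h t]) ![f', g', h'] t := by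
    rw [hasDerivAt_pi]
    intro i; fin_cases i <;> assumption
  exact (EuclideanSpace.equiv (Fin 3) ℝ).symm.hasFDerivAt.comp_hasDerivAt t hvec

def Kcone : Set (EuclideanSpace ℝ (Fin 3)) :=
  {x | x 1 ≤ 0 ∧ x 2 ≤ 0 ∧ 0 ≤ x 0 + √(x 1 * x 2)}

theorem isClosed_Kcone : IsClosed Kcone := by
  have hcoord (i : Fin 3) : Continuous fun x : EuclideanSpace ℝ (Fin 3) => x i :=
    (EuclideanSpace.proj i).continuous
  exact (isClosed_le (hcoord 1) continuous_const).inter <|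
    (isClosed_le (hcoord 2) continuous_const).inter <|
      isClosed_le continuous_const ((hcoord 0).add ((hcoord 1).mul (hcoord 2)).sqrt)

theorem convex_Kcone : Convex ℝ Kcone := by
  rintro x ⟨hx₁, hx₂, hx₀⟩ y ⟨hy₁, hy₂, hy₀⟩ a b ha hb -
  have hconc := sqrt_mul_add_sqrt_mul_le (mul_nonneg ha (neg_nonneg.2 hx₁))
    (mul_nonneg ha (neg_nonneg.2 hx₂)) (mul_nonneg hb (neg_nonneg.2 hy₁))
    (mul_nonneg hb (neg_nonneg.2 hy₂))
  rw [sqrt_mul_mul_mul_eq ha, sqrt_mul_mul_mul_eq hb, neg_mul_neg, neg_mul_neg,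
    show (a * -x 1 + b * -y 1) * (a * -x 2 + b * -y 2) = (a * x 1 + b * y 1) * (a * x 2 + b * y 2)
      by ring] at hconc
  refine ⟨?_, ?_, ?_⟩ <;> simp only [PiLp.add_apply, PiLp.smul_apply, smul_eq_mul]
  · nlinarith
  · nlinarith
  · nlinarith

theorem isConeSet_Kcone : IsConeSet Kcone := by
  rintro c hc x ⟨hx₁, hx₂, hx₀⟩
  simp only [Kcone, mem_ofPred_eq, PiLp.smul_apply, smul_eq_mul, sqrt_mul_mul_mul_eq hc.le]
  refine ⟨?_, ?_, ?_⟩ <;> nlinarith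

theorem γ₁_sub_xbar_mem_Kcone {t : ℝ} (ht : t ∈ Icc 0 (π / 2)) : γ₁ t - xbar ∈ Kcone := by
  rw [γ₁, xbar, v3_sub]
  refine ⟨by simp [v3_apply_one, sin_le_one], by simp [v3_apply_two], ?_⟩
  simp only [v3_apply_zero, v3_apply_one, v3_apply_two, sub_zero, sub_self, mul_zero, sqrt_zero,
    add_zero]
  exact cos_nonneg_of_mem_Icc ⟨by linarith [ht.1, pi_pos], ht.2⟩

theorem γ₂_sub_xbar_mem_Kcone (t : ℝ) : γ₂ t - xbar ∈ Kcone := by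
  rw [γ₂, xbar, v3_sub]
  refine ⟨by simp [v3_apply_one, sin_le_one], by norm_num [v3_apply_two], ?_⟩
  simp only [v3_apply_zero, v3_apply_one, v3_apply_two]
  -- `cos² t = (1 - sin t)(1 + sin t) ≤ 2 (1 - sin t)`
  have hcos : |cos t| ≤ √((sin t - 1) * (-1 - 1)) :=
    abs_le_sqrt (by nlinarith [sin_sq_add_cos_sq t, sin_le_one t, neg_one_le_sin t])
  linarith [neg_abs_le (cos t)]

theorem sub_xbar_mem_Kcone {y : EuclideanSpace ℝ (Fin 3)} (hy : y ∈ Cset) : y - xbar ∈ Kcone := by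
  have hconv : Convex ℝ {y : EuclideanSpace ℝ (Fin 3) | y - xbar ∈ Kcone} := by
    have h := convex_Kcone.translate_preimage_right (-xbar)
    simp_rw [neg_add_eq_sub] at h
    exact h
  refine convexHull_min ?_ hconv hy
  rintro _ (⟨t, ht, rfl⟩ | ⟨t, -, rfl⟩)
  exacts [γ₁_sub_xbar_mem_Kcone ht, γ₂_sub_xbar_mem_Kcone t]

theorem tangCone_subset_Kcone : TangCone xbar Cset ⊆ Kcone :=
  tangCone_subset_of_sub_mem isClosed_Kcone isConeSet_Kcone fun _ => sub_xbar_mem_Kcone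

theorem mem_Rray_iff {v : EuclideanSpace ℝ (Fin 3)} : v ∈ Rray ↔ v 0 = 0 ∧ v 1 = 0 ∧ v 2 ≤ 0 := by
  constructor
  · rintro ⟨z, hz, rfl⟩
    exact ⟨rfl, rfl, hz⟩
  · rintro ⟨h₀, h₁, h₂⟩
    refine ⟨v 2, h₂, ?_⟩
    ext i; fin_cases i
    exacts [h₀, h₁, rfl]

theorem zero_mem_Rray : (0 : EuclideanSpace ℝ (Fin 3)) ∈ Rray :=
  mem_Rray_iff.2 ⟨rfl, rfl, le_rfl⟩

theorem v3_one_zero_zero_notMem_Rray : v3 1 0 0 ∉ Rray := fun h =>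
  one_ne_zero (mem_Rray_iff.1 h).1

theorem isClosed_Rray : IsClosed Rray := by
  have hcoord (i : Fin 3) : Continuous fun x : EuclideanSpace ℝ (Fin 3) => x i :=
    (EuclideanSpace.proj i).continuous
  have hR : Rray = {v | v 0 = 0 ∧ v 1 = 0 ∧ v 2 ≤ 0} := Set.ext fun _ => mem_Rray_iff
  rw [hR]
  exact (isClosed_eq (hcoord 0) continuous_const).inter <|
    (isClosed_eq (hcoord 1) continuous_const).inter (isClosed_le (hcoord 2) continuous_const)

theorem convex_Rray : Convex ℝ Rray := by
  intro x hx y hy a b ha hb _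
  rw [mem_Rray_iff] at hx hy ⊢
  simp only [PiLp.add_apply, PiLp.smul_apply, smul_eq_mul, hx.1, hx.2.1, hy.1, hy.2.1, mul_zero,
    add_zero, true_and]
  nlinarith [hx.2.2, hy.2.2]

theorem Rray_subset_Kcone : Rray ⊆ Kcone := by
  intro v hv
  obtain ⟨h₀, h₁, h₂⟩ := mem_Rray_iff.1 hv
  exact ⟨h₁.le, h₂, by simp [h₀, h₁]⟩

theorem isFaceOf_Rray_Kcone : IsFaceOf Rray Kcone := by
  refine ⟨Rray_subset_Kcone, convex_Rray, isClosed_Rray, ?_⟩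
  rintro x hx y ⟨hy₁, hy₂, hy₀⟩ z ⟨hz₁, hz₂, hz₀⟩ ⟨a, b, ha, hb, -, rfl⟩
  obtain ⟨hx₀, hx₁, -⟩ := mem_Rray_iff.1 hx
  simp only [PiLp.add_apply, PiLp.smul_apply, smul_eq_mul] at hx₀ hx₁
  have hy₁' : y 1 = 0 := by nlinarith [mul_nonpos_of_nonneg_of_nonpos hb.le hz₁]
  have hz₁' : z 1 = 0 := by nlinarith [mul_nonpos_of_nonneg_of_nonpos ha.le hy₁]
  simp only [hy₁', hz₁', zero_mul, sqrt_zero, add_zero] at hy₀ hz₀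
  have hy₀' : y 0 = 0 := by nlinarith [mul_nonneg hb.le hz₀]
  have hz₀' : z 0 = 0 := by nlinarith [mul_nonneg ha.le hy₀]
  exact ⟨mem_Rray_iff.2 ⟨hy₀', hy₁', hy₂⟩, mem_Rray_iff.2 ⟨hz₀', hz₁', hz₂⟩⟩

theorem convex_Cset : Convex ℝ Cset :=
  convex_convexHull ℝ _

theorem γ₁_mem_Cset {t : ℝ} (ht : t ∈ Icc 0 (π / 2)) : γ₁ t ∈ Cset :=
  subset_convexHull ℝ _ (Or.inl ⟨t, ht, rfl⟩)

theorem γ₂_mem_Cset {t : ℝ} (ht : t ∈ Icc 0 π) : γ₂ t ∈ Cset :=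
  subset_convexHull ℝ _ (Or.inr ⟨t, ht, rfl⟩)

theorem γ₁_pi_div_two : γ₁ (π / 2) = xbar := by
  simp [γ₁, xbar]

theorem xbar_mem_Cset : xbar ∈ Cset :=
  γ₁_pi_div_two ▸ γ₁_mem_Cset ⟨by positivity, le_rfl⟩

theorem hasDerivAt_γ₂ (t : ℝ) : HasDerivAt γ₂ (v3 (-sin t) (cos t) 0) t :=
  hasDerivAt_v3 (hasDerivAt_cos t) (hasDerivAt_sin t) (hasDerivAt_const t (-1))

theorem γ₂_pi_div_two_sub_xbar : γ₂ (π / 2) - xbar = v3 0 0 (-2) := by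
  simp only [γ₂, xbar, v3_sub, cos_pi_div_two, sin_pi_div_two]
  norm_num

theorem Rray_subset_tangCone : Rray ⊆ TangCone xbar Cset := by
  rintro _ ⟨z, hz, rfl⟩
  have h := smul_sub_mem_tangCone convex_Cset xbar_mem_Cset
    (γ₂_mem_Cset (t := π / 2) ⟨by positivity, by linarith [pi_pos]⟩) (by linarith : 0 ≤ -z / 2)
  rwa [γ₂_pi_div_two_sub_xbar, v3_smul, mul_zero, show -z / 2 * -2 = z by ring] at h

theorem v3_one_zero_zero_mem_tangCone : v3 1 0 0 ∈ TangCone xbar Cset := by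
  refine mem_tangCone_of_hasDerivAt (c := fun u => v3 (sin u) (cos u) 1) ?_ ?_ ?_
  · simpa using hasDerivAt_v3 (hasDerivAt_sin 0) (hasDerivAt_cos 0) (hasDerivAt_const 0 1)
  · simp [xbar]
  · filter_upwards [Ioc_mem_nhdsGT (half_pos pi_pos)] with u hu
    have h := γ₁_mem_Cset (t := π / 2 - u) ⟨by linarith [hu.2], by linarith [hu.1]⟩
    rwa [γ₁, cos_pi_div_two_sub, sin_pi_div_two_sub] at h

theorem not_isExposedFaceOf_Rray : ¬ IsExposedFaceOf Rray (TangCone xbar Cset) := by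
  rintro ⟨p, hp⟩
  have hT0 : ∀ y ∈ TangCone xbar Cset, ⟪p, y⟫ ≤ 0 := by
    have h0 : (0 : EuclideanSpace ℝ (Fin 3)) ∈ _ := hp ▸ zero_mem_Rray
    exact fun y hy => (h0.2 y hy).trans_eq (inner_zero_right p)
  have hR0 : ∀ r ∈ Rray, ⟪p, r⟫ = 0 := fun r hr =>
    (hT0 r (Rray_subset_tangCone hr)).antisymm <| by
      have hr' : r ∈ _ := hp ▸ hr
      exact (inner_zero_right p).symm.trans_le (hr'.2 0 (Rray_subset_tangCone zero_mem_Rray))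
  have he : ⟪p, v3 1 0 0⟫ ≤ 0 := hT0 _ v3_one_zero_zero_mem_tangCone
  have hneg_e : ⟪p, v3 (-1) 0 0⟫ ≤ 0 := by
    have hγ₂ := (innerSL ℝ p).hasFDerivAt.comp_hasDerivAt (π / 2) (hasDerivAt_γ₂ (π / 2))
    simp only [sin_pi_div_two, cos_pi_div_two] at hγ₂
    refine hγ₂.nonpos_of_eventually_le ?_
    filter_upwards [Ioc_mem_nhdsGT (half_pos pi_pos)] with u hu
    have hu' : π / 2 + u ∈ Icc 0 π := ⟨by linarith [hu.1, pi_pos], by linarith [hu.2]⟩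
    have hγ : γ₂ (π / 2 + u) - xbar ∈ TangCone xbar Cset := by
      simpa using smul_sub_mem_tangCone convex_Cset xbar_mem_Cset (γ₂_mem_Cset hu') zero_le_one
    have hγ₀ : γ₂ (π / 2) - xbar ∈ Rray := γ₂_pi_div_two_sub_xbar ▸ ⟨-2, by norm_num, rfl⟩
    have h₁ := hT0 _ hγ
    have h₂ := hR0 _ hγ₀
    rw [inner_sub_right] at h₁ h₂
    simp only [Function.comp_apply, innerSL_apply_apply]
    linarith
  have hzero : ⟪p, v3 1 0 0⟫ = 0 := by
    rw [show v3 (-1) 0 0 = -v3 1 0 0 by rw [← neg_one_smul ℝ (v3 1 0 0), v3_smul]; norm_num,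
      inner_neg_right] at hneg_e
    linarith
  apply v3_one_zero_zero_notMem_Rray
  rw [hp]
  exact ⟨v3_one_zero_zero_mem_tangCone, fun y hy => (hT0 y hy).trans_eq hzero.symm⟩

theorem isFaceOf_Rray_tangCone : IsFaceOf Rray (TangCone xbar Cset) :=
  isFaceOf_Rray_Kcone.mono tangCone_subset_Kcone Rray_subset_tangCone

theorem Rray_subset_Gface : Rray ⊆ Gface := fun x hx =>
  ⟨Rray_subset_tangCone hx, fun y hy => by
    simpa [inner_v3_left, (mem_Rray_iff.1 hx).2.1] using (tangCone_subset_Kcone hy).1⟩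

/-- **Example.** The tangent cone `T(x̄;C)` at `x̄ = (0,1,1)` is not facially exposed:
the ray `{(0,0,z) : z ≤ 0}` is a face of `T(x̄;C)` (a subface of the face exposed by the
normal `(0,1,0)`) which is not an exposed face of `T(x̄;C)`. -/
theorem cylinder_example_tangent_cone_not_facially_exposed :
    IsFaceOf Rray (TangCone xbar Cset) ∧
    IsExposedFaceOf Gface (TangCone xbar Cset) ∧
    IsFaceOf Rray Gface ∧
    ¬ IsExposedFaceOf Rray (TangCone xbar Cset) ∧
    ¬ FaciallyExposed (TangCone xbar Cset) := by
  have hRG : IsFaceOf Rray Gface :=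
    isFaceOf_Rray_Kcone.mono (fun _ hy => tangCone_subset_Kcone hy.1) Rray_subset_Gface
  have hproper : IsProperFaceOf Rray (TangCone xbar Cset) :=
    ⟨isFaceOf_Rray_tangCone, ⟨0, zero_mem_Rray⟩,
      fun h => v3_one_zero_zero_notMem_Rray (h ▸ v3_one_zero_zero_mem_tangCone)⟩
  exact ⟨isFaceOf_Rray_tangCone, ⟨v3 0 1 0, rfl⟩, hRG, not_isExposedFaceOf_Rray,
    fun h => not_isExposedFaceOf_Rray (h Rray hproper)⟩

end CylinderExample
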